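/- Let G be a finite normal form game with strict preferences, let σ* be a no-harm equilibrium of Γ(a₀,k,I) with outcome b, and suppose the profile a ∈ A Pareto dominates b. Then no node x on the path of play of σ* has state S(x) = a. -/

import Mathlib

namespace NoHarm

/-- A finite normal form game with `n` players: finite action sets `A i`,
nonempty, with decidable equality, and utility functions `u i : Profile → ℝ`. -/
structure Game (n : ℕ) where
  A : Fin n → Type
  fintypeA : ∀ i, Fintype (A i)
  decA : ∀ i, DecidableEq (A i)
  neA : ∀ i, Nonempty (A i)
  u : Fin n → (∀ i, A i) → ℝ

attribute [instance] Game.fintypeA Game.decA Game.neA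

/-- Action profiles of `G`. -/
abbrev Profile {n : ℕ} (G : Game n) : Type := ∀ i, G.A i

/-- A recorded move in the extensive form game `Γ`: the acting player together
with their choice (`none` = pass, `some a` = choose action `a`; choosing the
current component of the state is "staying", any other action is "moving"). -/
abbrev Move {n : ℕ} (G : Game n) : Type := Σ i : Fin n, Option (G.A i)

/-- A node of `Γ`, identified with the history of moves leading to it
(the root is `[]`). -/
abbrev Hist {n : ℕ} (G : Game n) : Type := List (Move G)

variable {n : ℕ}

/-- One step of the left fold computing, along a history, the triple
(current state, current reference point, player who established the current
reference point by staying -- `none` for the initial reference point). -/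
def stepFold (G : Game n) (x : Profile G × Profile G × Option (Fin n)) (m : Move G) :
    Profile G × Profile G × Option (Fin n) :=
  match m with
  | ⟨_, none⟩ => x
  | ⟨i, some a⟩ =>
    if a = x.1 i then (x.1, x.1, some i)
    else (Function.update x.1 i a, x.2.1, x.2.2)

/-- The (state, reference point, proposer) data at the node `h` of `Γ(a0,·,·)`. -/
def fold3 (G : Game n) (a0 : Profile G) (h : Hist G) :
    Profile G × Profile G × Option (Fin n) :=
  h.foldl (stepFold G) (a0, a0, none)

/-- The state `S(x)` at a node. -/
def state (G : Game n) (a0 : Profile G) (h : Hist G) : Profile G := (fold3 G a0 h).1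

/-- The reference point at a node (the most recent state at which a player
stayed, initially `a0`). -/
def refpt (G : Game n) (a0 : Profile G) (h : Hist G) : Profile G := (fold3 G a0 h).2.1

/-- The player who established the current reference point by staying
(`none` if it is still the initial reference point `a0`). -/
def proposer (G : Game n) (a0 : Profile G) (h : Hist G) : Option (Fin n) :=
  (fold3 G a0 h).2.2

/-- `m` is a stay action at the node `h`: the mover chooses exactly the
component of the current state belonging to them. -/
def IsStay (G : Game n) (a0 : Profile G) (h : Hist G) (m : Move G) : Prop :=
  m.2 = some (state G a0 h m.1)

/-- Termination condition (i): one player stayed at a state `b`, making it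
the reference point, and a different player subsequently also stays at `b`. -/
def TerminalStay (G : Game n) (a0 : Profile G) (h : Hist G) : Prop :=
  ∃ (h' : Hist G) (m : Move G) (i : Fin n),
    h = h' ++ [m] ∧ IsStay G a0 h' m ∧ refpt G a0 h' = state G a0 h' ∧
    proposer G a0 h' = some i ∧ i ≠ m.1

/-- Termination condition (ii): all `n` players consecutively pass
(the last `n` moves are passes and every player is among their movers). -/
def TerminalPass (G : Game n) (h : Hist G) : Prop :=
  n ≤ h.length ∧ (∀ m ∈ h.drop (h.length - n), m.2 = none) ∧
    (∀ i : Fin n, ∃ m ∈ h.drop (h.length - n), m.1 = i)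

/-- Terminal nodes of `Γ(a0,·,·)`. -/
def Terminal (G : Game n) (a0 : Profile G) (h : Hist G) : Prop :=
  TerminalStay G a0 h ∨ TerminalPass G h

/-- Number of predecessor nodes of `h` having the same state as `h` at which
the move `m` was made. -/
def countAct (G : Game n) (a0 : Profile G) (h : Hist G) (m : Move G) : ℕ :=
  ((Finset.range h.length).filter
    (fun t => h[t]? = some m ∧ state G a0 (h.take t) = state G a0 h)).card

/-- Availability of the choice `c` for player `i` at node `h`: pass is always
available, and an action `a` is available iff `i` has chosen `a` at fewer than
`k` predecessor nodes carrying the same state as `h`. -/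
def availAct (G : Game n) (a0 : Profile G) (k : ℕ) (h : Hist G) {i : Fin n}
    (c : Option (G.A i)) : Prop :=
  ∀ a : G.A i, c = some a → countAct G a0 h ⟨i, some a⟩ < k

/-- `h` is a (valid) node of the game tree of `Γ(a0,k,I)`: at each step the
recorded mover is the active player given by the player function `I`, the
chosen action was available, and no proper predecessor is terminal. -/
structure IsNode (G : Game n) (a0 : Profile G) (k : ℕ) (I : Hist G → Fin n)
    (h : Hist G) : Prop where
  mover : ∀ (t : ℕ) (ht : t < h.length), (h.get ⟨t, ht⟩).1 = I (h.take t)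
  avail : ∀ (t : ℕ) (ht : t < h.length), availAct G a0 k (h.take t) (h.get ⟨t, ht⟩).2
  nonterm : ∀ t < h.length, ¬ Terminal G a0 (h.take t)

/-- The player function is admissible: along every path of play the numbers of
nodes at which any two players have been active differ by at most one. -/
def Admissible (G : Game n) (a0 : Profile G) (k : ℕ) (I : Hist G → Fin n) : Prop :=
  ∀ h, IsNode G a0 k I h → ∀ i j : Fin n,
    (h.map Sigma.fst).count i ≤ (h.map Sigma.fst).count j + 1

/-- A pure strategy of player `i`: a choice (pass or an action) at every node. -/
abbrev Strategy (G : Game n) (i : Fin n) : Type := Hist G → Option (G.A i)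

/-- A pure strategy profile. -/
abbrev StratProfile (G : Game n) : Type := ∀ i, Strategy G i

/-- A strategy profile is valid if at every non-terminal node of the tree the
active player's prescribed choice is available. -/
def ValidProfile (G : Game n) (a0 : Profile G) (k : ℕ) (I : Hist G → Fin n)
    (σ : StratProfile G) : Prop :=
  ∀ h, IsNode G a0 k I h → ¬ Terminal G a0 h → availAct G a0 k h (σ (I h) h)

open Classical in
/-- Play according to `σ` for (at most) the given number of steps from a node,
stopping at terminal nodes. -/
noncomputable def playN (G : Game n) (a0 : Profile G) (I : Hist G → Fin n)
    (σ : StratProfile G) : ℕ → Hist G → Hist G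
  | 0, h => h
  | (t + 1), h =>
    if Terminal G a0 h then h
    else playN G a0 I σ t (h ++ [⟨I h, σ (I h) h⟩])

/-- A (generous) upper bound for the length of any play of `Γ(a0,k,I)`. -/
def bound (G : Game n) (k : ℕ) : ℕ :=
  ((k + 2) * (Fintype.card (Profile G) + 2) * ((∑ i, Fintype.card (G.A i)) + 2) + 2)
    * (n + 2) * 4

/-- The outcome of `σ` in the subgame rooted at `h`: the reference point at the
terminal node reached by playing `σ` from `h`. -/
noncomputable def outcomeFrom (G : Game n) (a0 : Profile G) (k : ℕ)
    (I : Hist G → Fin n) (σ : StratProfile G) (h : Hist G) : Profile G :=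
  refpt G a0 (playN G a0 I σ (bound G k + 1) h)

/-- The outcome of the strategy profile `σ` in `Γ(a0,k,I)`. -/
noncomputable def outcome (G : Game n) (a0 : Profile G) (k : ℕ)
    (I : Hist G → Fin n) (σ : StratProfile G) : Profile G :=
  outcomeFrom G a0 k I σ []

/-- `σ` satisfies the no-harm principle: every stay action it prescribes, at
every (on- or off-path) non-terminal node of the tree, does not harm any other
player relative to the reference point at that node. -/
def SatNHP (G : Game n) (a0 : Profile G) (k : ℕ) (I : Hist G → Fin n)
    (σ : StratProfile G) : Prop :=
  ∀ h, IsNode G a0 k I h → ¬ Terminal G a0 h →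
    σ (I h) h = some (state G a0 h (I h)) →
    ∀ j, j ≠ I h → G.u j (refpt G a0 h) ≤ G.u j (state G a0 h)

/-- No-harm equilibrium of `Γ(a0,k,I)`: a valid strategy profile satisfying the
NHP such that at every non-terminal node the active player's choice is a best
response among deviations keeping the profile valid and NHP-compliant. -/
def NHE (G : Game n) (a0 : Profile G) (k : ℕ) (I : Hist G → Fin n)
    (σ : StratProfile G) : Prop :=
  ValidProfile G a0 k I σ ∧ SatNHP G a0 k I σ ∧
  ∀ h, IsNode G a0 k I h → ¬ Terminal G a0 h →
    ∀ τ : Strategy G (I h),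
      ValidProfile G a0 k I (Function.update σ (I h) τ) →
      SatNHP G a0 k I (Function.update σ (I h) τ) →
      G.u (I h) (outcomeFrom G a0 k I (Function.update σ (I h) τ) h) ≤
        G.u (I h) (outcomeFrom G a0 k I σ h)

/-- Subgame perfect equilibrium of `Γ(a0,k,I)` (no NHP constraint). -/
def SPE (G : Game n) (a0 : Profile G) (k : ℕ) (I : Hist G → Fin n)
    (σ : StratProfile G) : Prop :=
  ValidProfile G a0 k I σ ∧
  ∀ h, IsNode G a0 k I h → ¬ Terminal G a0 h →
    ∀ τ : Strategy G (I h),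
      ValidProfile G a0 k I (Function.update σ (I h) τ) →
      G.u (I h) (outcomeFrom G a0 k I (Function.update σ (I h) τ) h) ≤
        G.u (I h) (outcomeFrom G a0 k I σ h)

/-- `b` Pareto dominates `a`. -/
def ParetoDom (G : Game n) (b a : Profile G) : Prop :=
  (∀ i, G.u i a ≤ G.u i b) ∧ ∃ i, G.u i a < G.u i b

/-- `a` is Pareto optimal. -/
def ParetoOpt (G : Game n) (a : Profile G) : Prop := ∀ b, ¬ ParetoDom G b a

/-- `b` strictly Pareto dominates `a`. -/
def StrictDom (G : Game n) (b a : Profile G) : Prop := ∀ i, G.u i a < G.u i b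

/-- `a` is weakly Pareto optimal. -/
def WeakParetoOpt (G : Game n) (a : Profile G) : Prop := ∀ b, ¬ StrictDom G b a

/-- Preferences are strict: each utility function is injective on profiles. -/
def StrictPrefs (G : Game n) : Prop := ∀ i, Function.Injective (G.u i)


/-! ### Auxiliary lemmas -/

section Aux

variable {n : ℕ} {G : Game n} {a0 : Profile G} {k : ℕ} {I : Hist G → Fin n}
  {σ π : StratProfile G} {h : Hist G}

theorem fold3_append (h : Hist G) (m : Move G) :
    fold3 G a0 (h ++ [m]) = stepFold G (fold3 G a0 h) m := by
  simp [fold3]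

theorem fold3_snoc_pass (h : Hist G) (i : Fin n) :
    fold3 G a0 (h ++ [⟨i, none⟩]) = fold3 G a0 h := by
  rw [fold3_append]; rfl

theorem fold3_snoc_stay (h : Hist G) (i : Fin n) :
    fold3 G a0 (h ++ [⟨i, some (state G a0 h i)⟩]) =
      (state G a0 h, state G a0 h, some i) := by
  rw [fold3_append]; simp [stepFold, state]

theorem fold3_snoc_move (h : Hist G) (i : Fin n) (c : G.A i)
    (hc : c ≠ state G a0 h i) :
    fold3 G a0 (h ++ [⟨i, some c⟩]) =
      (Function.update (state G a0 h) i c, refpt G a0 h, proposer G a0 h) := by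
  rw [fold3_append]
  simp only [stepFold, state, refpt, proposer] at *
  rw [if_neg hc]

open Classical in
theorem playN_succ (t : ℕ) (h : Hist G) :
    playN G a0 I σ (t + 1) h =
      if Terminal G a0 h then h
      else playN G a0 I σ t (h ++ [⟨I h, σ (I h) h⟩]) := by
  rw [playN]

theorem state_snoc_stay (h : Hist G) (i : Fin n) :
    state G a0 (h ++ [⟨i, some (state G a0 h i)⟩]) = state G a0 h := by
  show (fold3 G a0 (h ++ [⟨i, some (state G a0 h i)⟩])).1 = state G a0 h
  rw [fold3_snoc_stay]

theorem playN_of_terminal (hT : Terminal G a0 h) (t : ℕ) :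
    playN G a0 I σ t h = h := by
  induction t with
  | zero => rfl
  | succ t ih => rw [playN_succ, if_pos hT]

theorem playN_succ_of_not_terminal (hT : ¬ Terminal G a0 h) (t : ℕ) :
    playN G a0 I σ (t + 1) h = playN G a0 I σ t (h ++ [⟨I h, σ (I h) h⟩]) := by
  rw [playN_succ, if_neg hT]

theorem playN_add (s t : ℕ) (h : Hist G) :
    playN G a0 I σ (s + t) h = playN G a0 I σ t (playN G a0 I σ s h) := by
  induction s generalizing h with
  | zero => rw [Nat.zero_add]; rfl
  | succ s ih =>
    by_cases hT : Terminal G a0 h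
    · rw [playN_of_terminal hT, playN_of_terminal hT, playN_of_terminal hT]
    · have : s + 1 + t = (s + t) + 1 := by omega
      rw [this, playN_succ_of_not_terminal hT, playN_succ_of_not_terminal hT, ih]

theorem isNode_nil : IsNode G a0 k I ([] : Hist G) := by
  refine ⟨?_, ?_, ?_⟩ <;> intro t ht <;> simp at ht

theorem IsNode.snoc (hn : IsNode G a0 k I h) (hT : ¬ Terminal G a0 h)
    {c : Option (G.A (I h))} (hc : availAct G a0 k h c) :
    IsNode G a0 k I (h ++ [⟨I h, c⟩]) := by
  have hlen : (h ++ [⟨I h, c⟩] : Hist G).length = h.length + 1 := by simp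
  have htake : ∀ t ≤ h.length, (h ++ [⟨I h, c⟩] : Hist G).take t = h.take t := by
    intro t ht
    rw [List.take_append_of_le_length ht]
  refine ⟨?_, ?_, ?_⟩
  · intro t ht
    rcases lt_or_eq_of_le (Nat.lt_succ_iff.mp (hlen ▸ ht)) with h' | h'
    · have := hn.mover t h'
      rw [List.get_eq_getElem, List.getElem_append_left h', htake t h'.le]
      exact this
    · subst h'
      have : (h ++ [⟨I h, c⟩] : Hist G).get ⟨h.length, ht⟩ = ⟨I h, c⟩ := by
        simp [List.get_eq_getElem]
      rw [this, htake h.length le_rfl, List.take_length]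
  · intro t ht
    rcases lt_or_eq_of_le (Nat.lt_succ_iff.mp (hlen ▸ ht)) with h' | h'
    · have := hn.avail t h'
      rw [List.get_eq_getElem, List.getElem_append_left h', htake t h'.le]
      exact this
    · subst h'
      have : (h ++ [⟨I h, c⟩] : Hist G).get ⟨h.length, ht⟩ = ⟨I h, c⟩ := by
        simp [List.get_eq_getElem]
      rw [this, htake h.length le_rfl, List.take_length]
      exact hc
  · intro t ht
    rcases lt_or_eq_of_le (Nat.lt_succ_iff.mp (hlen ▸ ht)) with h' | h'
    · rw [htake t h'.le]
      exact hn.nonterm t h'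
    · subst h'
      rw [htake h.length le_rfl, List.take_length]
      exact hT

theorem isNode_playN (hv : ValidProfile G a0 k I σ) (t : ℕ)
    (hn : IsNode G a0 k I h) : IsNode G a0 k I (playN G a0 I σ t h) := by
  induction t generalizing h with
  | zero => exact hn
  | succ t ih =>
    by_cases hT : Terminal G a0 h
    · rw [playN_of_terminal hT]; exact hn
    · rw [playN_succ_of_not_terminal hT]
      exact ih (hn.snoc hT (hv h hn hT))

/-- Monotonicity of the reference point's utility for a player `j` who never
stays, along the play of an NHP-compliant profile. -/
theorem refpt_mono (hv : ValidProfile G a0 k I π) (hs : SatNHP G a0 k I π)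
    (j : Fin n)
    (hj : ∀ h' : Hist G, h.length ≤ h'.length → I h' = j → π j h' = none)
    (hn : IsNode G a0 k I h) (t : ℕ) :
    G.u j (refpt G a0 h) ≤ G.u j (refpt G a0 (playN G a0 I π t h)) := by
  induction t generalizing h with
  | zero => exact le_rfl
  | succ t ih =>
    by_cases hT : Terminal G a0 h
    · rw [playN_of_terminal hT]
    · rw [playN_succ_of_not_terminal hT]
      have hnode' : IsNode G a0 k I (h ++ [⟨I h, π (I h) h⟩]) :=
        hn.snoc hT (hv h hn hT)
      have hlen' : ∀ h' : Hist G,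
          (h ++ [⟨I h, π (I h) h⟩] : Hist G).length ≤ h'.length →
          I h' = j → π j h' = none := by
        intro h' hl
        exact hj h' (by simp at hl; omega)
      have key : G.u j (refpt G a0 h) ≤ G.u j (refpt G a0 (h ++ [⟨I h, π (I h) h⟩])) := by
        rcases hm : π (I h) h with _ | c
        · rw [show refpt G a0 (h ++ [⟨I h, none⟩]) = refpt G a0 h from by
            unfold refpt; rw [fold3_snoc_pass]]
        · by_cases hcs : c = state G a0 h (I h)
          · subst hcs
            have hne : j ≠ I h := by
              intro hji
              have := hj h le_rfl hji.symm
              rw [hji] at this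
              rw [this] at hm
              exact absurd hm (by simp)
            have := hs h hn hT hm j hne
            rw [show refpt G a0 (h ++ [⟨I h, some (state G a0 h (I h))⟩]) =
                state G a0 h from by unfold refpt; rw [fold3_snoc_stay]]
            exact this
          · rw [show refpt G a0 (h ++ [⟨I h, some c⟩]) = refpt G a0 h from by
              unfold refpt; rw [fold3_snoc_move h (I h) c hcs]; rfl]

      exact key.trans (ih hlen' hnode')

theorem playN_stable (h : Hist G) {s t : ℕ}
    (hT : Terminal G a0 (playN G a0 I σ s h)) (hst : s ≤ t) :
    playN G a0 I σ t h = playN G a0 I σ s h := by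
  obtain ⟨d, rfl⟩ := Nat.exists_eq_add_of_le hst
  rw [playN_add]
  exact playN_of_terminal hT d

theorem playN_nil_snoc {t : ℕ} (hT : ¬ Terminal G a0 (playN G a0 I σ t [])) :
    playN G a0 I σ (t + 1) [] = playN G a0 I σ t [] ++
      [⟨I (playN G a0 I σ t []), σ (I (playN G a0 I σ t [])) (playN G a0 I σ t [])⟩] := by
  rw [playN_add t 1, playN_succ, if_neg hT]
  rfl

theorem playN_nil_length {t : ℕ}
    (hnt : ∀ s < t, ¬ Terminal G a0 (playN G a0 I σ s [])) :
    (playN G a0 I σ t []).length = t := by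
  induction t with
  | zero => rfl
  | succ t ih =>
    rw [playN_nil_snoc (hnt t (Nat.lt_succ_self t))]
    simp [ih (fun s hs => hnt s (by omega))]

theorem playN_nil_prefix {s t : ℕ}
    (hnt : ∀ r < t, ¬ Terminal G a0 (playN G a0 I σ r [])) (hst : s ≤ t) :
    playN G a0 I σ s [] = (playN G a0 I σ t []).take s := by
  induction t with
  | zero =>
    have : s = 0 := by omega
    subst this; rfl
  | succ t ih =>
    have hnt' : ∀ r < t, ¬ Terminal G a0 (playN G a0 I σ r []) :=
      fun r hr => hnt r (by omega)
    rcases Nat.lt_or_ge s (t + 1) with hl | hl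
    · have hs : s ≤ t := by omega
      rw [playN_nil_snoc (hnt t (Nat.lt_succ_self t)),
        List.take_append_of_le_length (by rw [playN_nil_length hnt']; exact hs)]
      exact ih hnt' hs
    · have : s = t + 1 := by omega
      subst this
      rw [List.take_of_length_le (by rw [playN_nil_length hnt])]

theorem IsNode.take (hn : IsNode G a0 k I h) (s : ℕ) :
    IsNode G a0 k I (h.take s) := by
  have hlen : (h.take s).length ≤ h.length := by simp [List.length_take]
  have hget : ∀ (t : ℕ) (ht : t < (h.take s).length),
      (h.take s).get ⟨t, ht⟩ = h.get ⟨t, lt_of_lt_of_le ht hlen⟩ := by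
    intro t ht
    have hts : t < s := by simp [List.length_take] at ht; omega
    simp only [List.get_eq_getElem]
    exact (List.getElem_take' (xs := h) (lt_of_lt_of_le ht hlen) hts).symm
  have htk : ∀ t < (h.take s).length, (h.take s).take t = h.take t := by
    intro t ht
    rw [List.take_take]
    congr 1
    simp [List.length_take] at ht
    omega
  refine ⟨?_, ?_, ?_⟩
  · intro t ht
    rw [hget t ht, htk t ht]
    exact hn.mover t _
  · intro t ht
    rw [hget t ht, htk t ht]
    exact hn.avail t _
  · intro t ht
    rw [htk t ht]
    exact hn.nonterm t (lt_of_lt_of_le ht hlen)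

theorem sum_count_fin {N : ℕ} (l : List (Fin N)) :
    ∑ i : Fin N, l.count i = l.length := by
  induction l with
  | nil => simp
  | cons a l ih =>
    simp only [List.count_cons, List.length_cons, Finset.sum_add_distrib, ih]
    congr 1
    simp [beq_iff_eq]

theorem count_eq_of_balanced {N q : ℕ} (l : List (Fin N))
    (hlen : l.length = N * q)
    (hbal : ∀ i j : Fin N, l.count i ≤ l.count j + 1) (i : Fin N) :
    l.count i = q := by
  have hsum : ∑ j : Fin N, l.count j = N * q := by rw [sum_count_fin, hlen]
  by_contra hne
  rcases Nat.lt_or_ge (l.count i) q with hlt | hge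
  · have hall : ∀ j : Fin N, l.count j ≤ q := fun j => (hbal j i).trans (by omega)
    have : ∑ j : Fin N, l.count j < ∑ _j : Fin N, q :=
      Finset.sum_lt_sum (fun j _ => hall j) ⟨i, Finset.mem_univ i, hlt⟩
    rw [hsum, Finset.sum_const, Finset.card_univ, Fintype.card_fin, smul_eq_mul] at this
    omega
  · have hgt : q < l.count i := by omega
    have hall : ∀ j : Fin N, q ≤ l.count j := by
      intro j
      have := hbal i j
      omega
    have : ∑ _j : Fin N, q < ∑ j : Fin N, l.count j :=
      Finset.sum_lt_sum (fun j _ => hall j) ⟨i, Finset.mem_univ i, hgt⟩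
    rw [hsum, Finset.sum_const, Finset.card_univ, Fintype.card_fin, smul_eq_mul] at this
    omega

/-- Forget the `Option` in a move, mapping passes to junk actions. -/
noncomputable def psi (G : Game n) : Move G → Σ i : Fin n, G.A i :=
  fun m => ⟨m.1, m.2.getD (Classical.arbitrary _)⟩

theorem psi_inj {m m' : Move G} (h2 : m.2 ≠ none) (h3 : m'.2 ≠ none)
    (h1 : psi G m = psi G m') : m = m' := by
  obtain ⟨i, c⟩ := m; obtain ⟨i', c'⟩ := m'
  rcases c with _ | a
  · exact absurd rfl h2
  rcases c' with _ | a'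
  · exact absurd rfl h3
  simp only [psi, Option.getD_some] at h1
  obtain ⟨rfl, h⟩ := Sigma.mk.inj_iff.mp h1
  rw [eq_of_heq h]

theorem exists_terminal (hn2 : 2 ≤ n) (hI : Admissible G a0 k I)
    (hv : ValidProfile G a0 k I σ) :
    ∃ s ≤ bound G k, Terminal G a0 (playN G a0 I σ s []) := by
  classical
  by_contra hcon
  push_neg at hcon
  have hn0 : 0 < n := by omega
  set Q : ℕ := ∑ i, Fintype.card (G.A i) with hQ
  set P : ℕ := Fintype.card (Profile G) with hP
  set B : ℕ := bound G k + 1 with hB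
  have hnt : ∀ s < B, ¬ Terminal G a0 (playN G a0 I σ s []) :=
    fun s hs => hcon s (by omega)
  set H : Hist G := playN G a0 I σ B [] with hH
  have hlen : H.length = B := playN_nil_length hnt
  have hpref : ∀ s ≤ B, playN G a0 I σ s [] = H.take s :=
    fun s hs => playN_nil_prefix hnt hs
  have hnode : IsNode G a0 k I H := isNode_playN hv B isNode_nil
  set dm : Move G := ⟨⟨0, hn0⟩, none⟩ with hdm
  set mv : ℕ → Move G := fun t => (H[t]?).getD dm with hmvdef
  have hmv : ∀ t, t < B → H[t]? = some (mv t) := by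
    intro t ht
    have ht' : t < H.length := by rw [hlen]; exact ht
    simp [hmvdef, List.getElem?_eq_getElem ht']
  have hgetmv : ∀ (t : ℕ) (ht : t < H.length), H.get ⟨t, ht⟩ = mv t := by
    intro t ht
    simp [hmvdef, List.get_eq_getElem, List.getElem?_eq_getElem ht]
  set φ : ℕ → ((Σ i : Fin n, G.A i) × Profile G) :=
    fun t => (psi G (mv t), state G a0 (H.take t)) with hφdef
  set F : Finset ℕ := (Finset.range B).filter (fun t => (mv t).2 ≠ none) with hF
  -- every fiber of `φ` on `F` has at most `k` elements
  have hfiber : ∀ p ∈ F.image φ, (F.filter (fun t => φ t = p)).card ≤ k := by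
    intro p hp
    set S : Finset ℕ := F.filter (fun t => φ t = p) with hSdef
    rcases S.eq_empty_or_nonempty with he | hne'
    · rw [he]; simp
    · set tm := S.max' hne' with htmdef
      have htmS : tm ∈ S := S.max'_mem hne'
      have htmF : tm ∈ F := (Finset.mem_filter.mp htmS).1
      have htmp : φ tm = p := (Finset.mem_filter.mp htmS).2
      have htmB : tm < B := Finset.mem_range.mp (Finset.mem_filter.mp htmF).1
      have htm_np : (mv tm).2 ≠ none := (Finset.mem_filter.mp htmF).2
      obtain ⟨atm, hatm⟩ : ∃ a, (mv tm).2 = some a :=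
        Option.ne_none_iff_exists'.mp htm_np
      have havail := hnode.avail tm (hlen ▸ htmB)
      rw [hgetmv tm (hlen ▸ htmB)] at havail
      have hmveq : (⟨(mv tm).1, some atm⟩ : Move G) = mv tm := by
        rw [← hatm]
      have hcnt : countAct G a0 (H.take tm) (mv tm) < k := by
        have := havail atm hatm
        rwa [hmveq] at this
      have hsub : S.erase tm ⊆ (Finset.range (H.take tm).length).filter
          (fun r => (H.take tm)[r]? = some (mv tm) ∧
            state G a0 ((H.take tm).take r) = state G a0 (H.take tm)) := by
        intro r hr
        have hrS : r ∈ S := Finset.mem_of_mem_erase hr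
        have hrne : r ≠ tm := Finset.ne_of_mem_erase hr
        have hrtm : r < tm := lt_of_le_of_ne (S.le_max' r hrS) hrne
        have hrF : r ∈ F := (Finset.mem_filter.mp hrS).1
        have hrB : r < B := Finset.mem_range.mp (Finset.mem_filter.mp hrF).1
        have hrnp : (mv r).2 ≠ none := (Finset.mem_filter.mp hrF).2
        have hφr : φ r = φ tm := by
          rw [(Finset.mem_filter.mp hrS).2, htmp]
        have hmvr : mv r = mv tm :=
          psi_inj hrnp htm_np (congrArg Prod.fst hφr)
        have hstr : state G a0 (H.take r) = state G a0 (H.take tm) :=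
          congrArg Prod.snd hφr
        have htklen : (H.take tm).length = tm := by
          simp [List.length_take, hlen]; omega
        refine Finset.mem_filter.mpr ⟨Finset.mem_range.mpr (by omega), ?_, ?_⟩
        · rw [List.getElem?_take_of_lt hrtm, hmv r hrB, hmvr]
        · rw [List.take_take, min_eq_left hrtm.le, hstr]
      have hcard1 : (S.erase tm).card ≤ countAct G a0 (H.take tm) (mv tm) :=
        Finset.card_le_card hsub
      have hcard2 : S.card = (S.erase tm).card + 1 := by
        rw [Finset.card_erase_of_mem htmS]
        have : 0 < S.card := Finset.card_pos.mpr hne'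
        omega
      omega
  -- hence at most `k * (Q * P)` non-pass moves
  have hQP : (F.image φ).card ≤ Q * P := by
    have h2 : (F.image φ).card ≤ Fintype.card ((Σ i : Fin n, G.A i) × Profile G) :=
      Finset.card_le_univ _
    rwa [Fintype.card_prod, Fintype.card_sigma] at h2
  have hcardF : F.card ≤ k * (Q * P) := by
    have h1 := Finset.card_le_mul_card_image (f := φ) F k hfiber
    calc F.card ≤ k * (F.image φ).card := h1
      _ ≤ k * (Q * P) := Nat.mul_le_mul_left k hQP
  -- prefix counts of movers
  have hcount : ∀ q, n * q ≤ B → ∀ i : Fin n,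
      ((H.take (n * q)).map Sigma.fst).count i = q := by
    intro q hq i
    apply count_eq_of_balanced
    · simp only [List.length_map, List.length_take, hlen]
      omega
    · intro i' j'
      exact hI _ (hnode.take _) i' j'
  -- every aligned block of `n` moves contains a non-pass move
  have hblock : ∀ r, n * (r + 1) ≤ bound G k → ∃ t ∈ F, n * r ≤ t ∧ t < n * r + n := by
    intro r hr
    by_contra hcb
    push_neg at hcb
    have hrn : n * (r + 1) = n * r + n := by ring
    have hpass : ∀ t, n * r ≤ t → t < n * r + n → (mv t).2 = none := by
      intro t h1 h2
      by_contra hnp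
      have htF : t ∈ F := Finset.mem_filter.mpr
        ⟨Finset.mem_range.mpr (by omega), hnp⟩
      have := hcb t htF h1
      omega
    set T := n * (r + 1) with hT
    have hTn : T = n * r + n := by rw [hT]; ring
    have hTB : T ≤ bound G k := hr
    apply hcon T hTB
    rw [hpref T (by omega)]
    right
    have hTlen : (H.take T).length = T := by
      simp only [List.length_take, hlen]; omega
    have hWin : (H.take T).drop ((H.take T).length - n) = (H.drop (n * r)).take n := by
      have e1 : T - n = n * r := by omega
      have e2 : T - (T - n) = n := by omega
      rw [hTlen, List.drop_take, e2, e1]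
    refine ⟨by rw [hTlen]; omega, ?_, ?_⟩
    · intro m hm
      rw [hWin] at hm
      obtain ⟨idx, hidx, hEq⟩ := List.mem_iff_getElem.mp hm
      have hidx' : idx < n :=
        lt_of_lt_of_le hidx (by rw [List.length_take]; exact min_le_left _ _)
      have hidx2 : n * r + idx < H.length := by rw [hlen]; omega
      have hidxd : idx < (H.drop (n * r)).length := by
        rw [List.length_drop]; omega
      have hgel : ((H.drop (n * r)).take n)[idx]'hidx = H[n * r + idx]'hidx2 := by
        rw [← List.getElem_take' (xs := _) hidxd hidx', List.getElem_drop]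
      rw [hgel] at hEq
      have hmvidx : m = mv (n * r + idx) := by
        have h1 := hmv (n * r + idx) (by omega)
        rw [List.getElem?_eq_getElem hidx2] at h1
        rw [← hEq]
        exact Option.some.inj h1
      rw [hmvidx]
      exact hpass _ (by omega) (by omega)
    · intro i
      have hsplit : H.take T = H.take (n * r) ++ (H.drop (n * r)).take n := by
        rw [← List.take_add]
        congr 1
      have hc1 : ((H.take (n * r)).map Sigma.fst).count i = r :=
        hcount r (by omega) i
      have hc2 : ((H.take T).map Sigma.fst).count i = r + 1 :=
        hcount (r + 1) (by omega) i
      have hc3 : (((H.drop (n * r)).take n).map Sigma.fst).count i = 1 := by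
        rw [hsplit, List.map_append, List.count_append] at hc2
        omega
      have : i ∈ ((H.drop (n * r)).take n).map Sigma.fst := by
        rw [← List.count_pos_iff]
        omega
      obtain ⟨m, hm1, hm2⟩ := List.mem_map.mp this
      exact ⟨m, by rw [hWin]; exact hm1, hm2⟩
  -- an injection from blocks into non-pass moves
  have harith : n * (k * (Q * P) + 1) ≤ bound G k := by
    have h1 : k * (Q * P) + 1 ≤ (k + 2) * (P + 2) * (Q + 2) + 2 := by
      have : k * (Q * P) ≤ (k + 2) * (P + 2) * (Q + 2) := by nlinarith
      omega
    have h2 : n ≤ (n + 2) * 4 := by omega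
    calc n * (k * (Q * P) + 1)
        ≤ ((n + 2) * 4) * ((k + 2) * (P + 2) * (Q + 2) + 2) :=
          Nat.mul_le_mul h2 h1
      _ = bound G k := by rw [bound]; ring
  have hblock' : ∀ r : ℕ, ∃ t, n * (r + 1) ≤ bound G k →
      t ∈ F ∧ n * r ≤ t ∧ t < n * r + n := by
    intro r
    by_cases hr : n * (r + 1) ≤ bound G k
    · obtain ⟨t, h1, h2, h3⟩ := hblock r hr
      exact ⟨t, fun _ => ⟨h1, h2, h3⟩⟩
    · exact ⟨0, fun h => absurd h hr⟩
  have hinj : k * (Q * P) + 1 ≤ F.card := by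
    have hrange : ∀ r, r < k * (Q * P) + 1 → n * (r + 1) ≤ bound G k := by
      intro r hrm
      calc n * (r + 1) ≤ n * (k * (Q * P) + 1) := by
            apply Nat.mul_le_mul_left; omega
        _ ≤ bound G k := harith
    have hmapsto : ∀ r ∈ Finset.range (k * (Q * P) + 1),
        (hblock' r).choose ∈ F := by
      intro r hrmem
      exact ((hblock' r).choose_spec (hrange r (Finset.mem_range.mp hrmem))).1
    have hinjOn : Set.InjOn (fun r => (hblock' r).choose)
        (Finset.range (k * (Q * P) + 1)) := by
      intro r1 h1 r2 h2 heq
      have hm1 := Finset.mem_range.mp (Finset.mem_coe.mp h1)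
      have hm2 := Finset.mem_range.mp (Finset.mem_coe.mp h2)
      have hs1 := ((hblock' r1).choose_spec (hrange r1 hm1)).2
      have hs2 := ((hblock' r2).choose_spec (hrange r2 hm2)).2
      simp only at heq
      rw [heq] at hs1
      rcases lt_trichotomy r1 r2 with hlt | heqr | hgt
      · exfalso
        have hmm : n * (r1 + 1) ≤ n * r2 := Nat.mul_le_mul_left n (by omega)
        have hmm2 : n * (r1 + 1) = n * r1 + n := by ring
        omega
      · exact heqr
      · exfalso
        have hmm : n * (r2 + 1) ≤ n * r1 := Nat.mul_le_mul_left n (by omega)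
        have hmm2 : n * (r2 + 1) = n * r2 + n := by ring
        omega
    have := Finset.card_le_card_of_injOn _ hmapsto hinjOn
    rwa [Finset.card_range] at this
  omega

theorem outcomeFrom_playN_nil {s0 : ℕ}
    (hterm : Terminal G a0 (playN G a0 I σ s0 [])) (hs0 : s0 ≤ bound G k) (t : ℕ) :
    outcomeFrom G a0 k I σ (playN G a0 I σ t []) = outcome G a0 k I σ := by
  unfold outcome
  unfold outcomeFrom
  rw [← playN_add]
  rw [playN_stable [] hterm (by omega), playN_stable [] hterm (by omega)]
  rw [playN_stable [] hterm (show s0 ≤ bound G k + 1 by omega)]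

theorem refpt_le_outcome (hσ : NHE G a0 k I σ) {s0 : ℕ}
    (hterm : Terminal G a0 (playN G a0 I σ s0 [])) (hs0 : s0 ≤ bound G k) :
    ∀ t j, G.u j (refpt G a0 (playN G a0 I σ t [])) ≤ G.u j (outcome G a0 k I σ) := by
  obtain ⟨hvalid, hnhp, hbr⟩ := hσ
  have hstab : ∀ t, s0 ≤ t → playN G a0 I σ t [] = playN G a0 I σ s0 [] :=
    fun t ht => playN_stable [] hterm ht
  have hout : outcome G a0 k I σ = refpt G a0 (playN G a0 I σ s0 []) := by
    unfold outcome outcomeFrom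
    rw [hstab (bound G k + 1) (by omega)]
  have main : ∀ d t, bound G k + 1 ≤ t + d → ∀ j,
      G.u j (refpt G a0 (playN G a0 I σ t [])) ≤ G.u j (outcome G a0 k I σ) := by
    intro d
    induction d with
    | zero =>
      intro t ht j
      rw [hstab t (by omega), hout]
    | succ d ih =>
      intro t ht j
      by_cases htB : bound G k + 1 ≤ t + d
      · exact ih t htB j
      · by_cases hT : Terminal G a0 (playN G a0 I σ t [])
        · have : refpt G a0 (playN G a0 I σ t []) =
              refpt G a0 (playN G a0 I σ (bound G k + 1) []) := by
            rw [playN_stable [] hT (show t ≤ bound G k + 1 by omega)]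
          rw [this]
          exact le_of_eq (congrArg _ (by rw [hstab _ (by omega), hout]))
        · have hnode_t : IsNode G a0 k I (playN G a0 I σ t []) :=
            isNode_playN hvalid t isNode_nil
          set x := playN G a0 I σ t [] with hx
          have hsucc : playN G a0 I σ (t + 1) [] = x ++ [⟨I x, σ (I x) x⟩] :=
            playN_nil_snoc hT
          have ih1 : ∀ j,
              G.u j (refpt G a0 (playN G a0 I σ (t + 1) [])) ≤
                G.u j (outcome G a0 k I σ) :=
            fun j => ih (t + 1) (by omega) j
          rcases hc : σ (I x) x with _ | cc
          · have heq : refpt G a0 (playN G a0 I σ (t + 1) []) = refpt G a0 x := by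
              rw [hsucc, hc]
              unfold refpt
              rw [fold3_snoc_pass]
            rw [← heq]
            exact ih1 j
          · by_cases hstay : cc = state G a0 x (I x)
            · subst hstay
              have hrp : refpt G a0 (playN G a0 I σ (t + 1) []) = state G a0 x := by
                rw [hsucc, hc]
                unfold refpt
                rw [fold3_snoc_stay]
              by_cases hj : j = I x
              · subst hj
                set τ : Strategy G (I x) := fun _ => none with hτ
                have hval' : ValidProfile G a0 k I (Function.update σ (I x) τ) := by
                  intro h' hn' hT'
                  by_cases hi : I h' = I x
                  · rw [hi, Function.update_self]
                    intro a ha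
                    exact absurd ha (by simp [hτ])
                  · rw [Function.update_of_ne hi]
                    exact hvalid h' hn' hT'
                have hnhp' : SatNHP G a0 k I (Function.update σ (I x) τ) := by
                  intro h' hn' hT' hstay' j' hj'
                  by_cases hi : I h' = I x
                  · rw [hi, Function.update_self] at hstay'
                    exact absurd hstay' (by simp [hτ])
                  · rw [Function.update_of_ne hi] at hstay'
                    exact hnhp h' hn' hT' hstay' j' hj'
                have hbr' := hbr x hnode_t hT τ hval' hnhp'
                have hmono := refpt_mono (π := Function.update σ (I x) τ) hval'
                  hnhp' (I x)
                  (fun h' _ _ => by rw [Function.update_self])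
                  hnode_t (bound G k + 1)
                have houtx : outcomeFrom G a0 k I σ x = outcome G a0 k I σ :=
                  outcomeFrom_playN_nil hterm hs0 t
                calc G.u (I x) (refpt G a0 x)
                    ≤ G.u (I x) (refpt G a0
                        (playN G a0 I (Function.update σ (I x) τ)
                          (bound G k + 1) x)) := hmono
                  _ = G.u (I x) (outcomeFrom G a0 k I
                        (Function.update σ (I x) τ) x) := rfl
                  _ ≤ G.u (I x) (outcomeFrom G a0 k I σ x) := hbr'
                  _ = G.u (I x) (outcome G a0 k I σ) := by rw [houtx]
              · have hnh := hnhp x hnode_t hT hc j hj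
                exact hnh.trans (hrp ▸ ih1 j)
            · have heq : refpt G a0 (playN G a0 I σ (t + 1) []) = refpt G a0 x := by
                rw [hsucc, hc]
                unfold refpt
                rw [fold3_snoc_move x (I x) cc hstay]
                rfl
              rw [← heq]
              exact ih1 j
  intro t j
  exact main (bound G k + 1) t (by omega) j

end Aux

/-- If `σ` is a no-harm equilibrium of `Γ(a0,k,I)` with
outcome `b` and the profile `a` Pareto dominates `b`, then no node on the path
of play of `σ` carries the state `a`. -/
theorem dominating_profile_not_on_path {n : ℕ} (hn : 2 ≤ n) (G : Game n)
    (hG : StrictPrefs G) (a0 : Profile G) (k : ℕ) (hk : 0 < k)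
    (I : Hist G → Fin n) (hI : Admissible G a0 k I) (σ : StratProfile G)
    (hσ : NHE G a0 k I σ) (b : Profile G) (hb : outcome G a0 k I σ = b)
    (a : Profile G) (ha : ParetoDom G a b) :
    ∀ t : ℕ, state G a0 (playN G a0 I σ t []) ≠ a := by
  classical
  intro t0 hstate
  obtain ⟨hvalid, hnhp, hbr⟩ := hσ
  obtain ⟨s0, hs0, hterm⟩ := exists_terminal hn hI hvalid
  -- strict dominance of `a` over `b` for every player
  have hab : a ≠ b := by
    rintro rfl
    obtain ⟨-, i, hi⟩ := ha
    exact lt_irrefl _ hi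
  have hdom : ∀ j, G.u j b < G.u j a := by
    intro j
    rcases lt_or_eq_of_le (ha.1 j) with hlt | heq
    · exact hlt
    · exact absurd (hG j heq).symm hab
  -- the first time the state is `a`
  have hex : ∃ t, state G a0 (playN G a0 I σ t []) = a := ⟨t0, hstate⟩
  set T := Nat.find hex with hTdef
  have hTa : state G a0 (playN G a0 I σ T []) = a := Nat.find_spec hex
  have hTmin : ∀ t < T, state G a0 (playN G a0 I σ t []) ≠ a :=
    fun t ht => Nat.find_min hex ht
  have hpre_nt : ∀ t < T, ¬ Terminal G a0 (playN G a0 I σ t []) := by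
    intro t ht hterm'
    exact hTmin t ht (by rw [playN_stable [] hterm' (le_of_lt ht)] at hTa; exact hTa)
  have hTs0 : T ≤ s0 := by
    by_contra hgt
    push_neg at hgt
    exact hTmin s0 hgt (by rw [playN_stable [] hterm (le_of_lt hgt)] at hTa; exact hTa)
  have hlenpT : (playN G a0 I σ T []).length = T := playN_nil_length hpre_nt
  have hprefix : ∀ t ≤ T, playN G a0 I σ t [] = (playN G a0 I σ T []).take t :=
    fun t ht => playN_nil_prefix hpre_nt ht
  have hout_b : refpt G a0 (playN G a0 I σ (bound G k + 1) []) = b := by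
    rw [← hb]; rfl
  -- the node at time T is not terminal
  have hT_nt : ¬ Terminal G a0 (playN G a0 I σ T []) := by
    intro htermT
    have houtT : refpt G a0 (playN G a0 I σ T []) = b := by
      rw [← hout_b, playN_stable [] htermT (show T ≤ bound G k + 1 by omega)]
    rcases htermT with hstay | hpass
    · obtain ⟨h', m, i0, hTeq, hIsStay, hrfst, hprop, hine⟩ := hstay
      have hm : m = ⟨m.1, some (state G a0 h' m.1)⟩ := by
        conv_lhs => rw [← Sigma.eta m]
        rw [hIsStay]
      have hrT : refpt G a0 (playN G a0 I σ T []) = state G a0 h' := by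
        rw [hTeq, hm]
        unfold refpt
        rw [fold3_snoc_stay]
      have hsT : state G a0 (playN G a0 I σ T []) = state G a0 h' := by
        rw [hTeq, hm, state_snoc_stay]
      exact hab (by rw [← hTa, hsT, ← hrT, houtT])
    · obtain ⟨hlenT, hpassall, hcover⟩ := hpass
      rw [hlenpT] at hlenT
      have hTpos : 1 ≤ T := by omega
      have hnt' : ¬ Terminal G a0 (playN G a0 I σ (T - 1) []) :=
        hpre_nt (T - 1) (by omega)
      have hsucc : playN G a0 I σ T [] = playN G a0 I σ (T - 1) [] ++
          [⟨I (playN G a0 I σ (T - 1) []),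
            σ (I (playN G a0 I σ (T - 1) [])) (playN G a0 I σ (T - 1) [])⟩] := by
        have := playN_nil_snoc (σ := σ) hnt'
        rw [show T - 1 + 1 = T by omega] at this
        exact this
      have hlenT1 : (playN G a0 I σ (T - 1) []).length = T - 1 :=
        playN_nil_length (fun r hr => hpre_nt r (by omega))
      have hmem : (⟨I (playN G a0 I σ (T - 1) []),
          σ (I (playN G a0 I σ (T - 1) [])) (playN G a0 I σ (T - 1) [])⟩ : Move G) ∈
          (playN G a0 I σ T []).drop ((playN G a0 I σ T []).length - n) := by
        rw [hlenpT, hsucc, List.drop_append_of_le_length (by rw [hlenT1]; omega)]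
        exact List.mem_append_right _ (List.mem_singleton.mpr rfl)
      have hmpass := hpassall _ hmem
      have hstT : state G a0 (playN G a0 I σ T []) =
          state G a0 (playN G a0 I σ (T - 1) []) := by
        rw [hsucc]
        have hmv2 : (⟨I (playN G a0 I σ (T - 1) []),
            σ (I (playN G a0 I σ (T - 1) [])) (playN G a0 I σ (T - 1) [])⟩ : Move G) =
            ⟨I (playN G a0 I σ (T - 1) []), none⟩ := by
          conv_lhs => rw [← Sigma.eta (⟨I (playN G a0 I σ (T - 1) []),
            σ (I (playN G a0 I σ (T - 1) [])) (playN G a0 I σ (T - 1) [])⟩ : Move G)]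
          rw [hmpass]
        rw [hmv2]
        unfold state
        rw [fold3_snoc_pass]
      exact hTmin (T - 1) (by omega) (by rw [← hstT]; exact hTa)
  -- the deviation: stay at `a` at the node `x`, pass everywhere else
  set x : Hist G := playN G a0 I σ T [] with hxdef
  have hnodex : IsNode G a0 k I x := isNode_playN hvalid T isNode_nil
  have hcnt0 : ∀ m : Move G, countAct G a0 x m = 0 := by
    intro m
    rw [countAct, Finset.card_eq_zero, Finset.filter_eq_empty_iff]
    intro t htr
    rw [Finset.mem_range, hlenpT] at htr
    rintro ⟨-, h2⟩
    rw [← hprefix t (by omega)] at h2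
    exact hTmin t htr (by rw [h2]; exact hTa)
  have hNHPstay : ∀ j, G.u j (refpt G a0 x) ≤ G.u j (state G a0 x) := by
    intro j
    have h1 := refpt_le_outcome ⟨hvalid, hnhp, hbr⟩ hterm hs0 T j
    rw [hb] at h1
    rw [show state G a0 x = a from hTa]
    exact h1.trans (le_of_lt (hdom j))
  set τ : Strategy G (I x) := fun h' => if h' = x then some (a (I x)) else none
    with hτdef
  have hτx : τ x = some (a (I x)) := by rw [hτdef]; simp
  have hτne : ∀ h' : Hist G, h' ≠ x → τ h' = none := by
    intro h' hne
    rw [hτdef]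
    simp [hne]
  have hmvstay : (⟨I x, some (a (I x))⟩ : Move G) =
      ⟨I x, some (state G a0 x (I x))⟩ := by
    rw [show state G a0 x = a from hTa]
  have hval' : ValidProfile G a0 k I (Function.update σ (I x) τ) := by
    intro h' hn' hT'
    by_cases hi : I h' = I x
    · rw [hi, Function.update_self]
      intro a' ha'
      by_cases hhx : h' = x
      · subst hhx
        rw [hcnt0]
        exact hk
      · rw [hτne h' hhx] at ha'
        exact absurd ha' (by simp)
    · rw [Function.update_of_ne hi]
      exact hvalid h' hn' hT'
  have hnhp' : SatNHP G a0 k I (Function.update σ (I x) τ) := by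
    intro h' hn' hT' hstay' j' hj'
    by_cases hi : I h' = I x
    · rw [hi, Function.update_self] at hstay'
      by_cases hhx : h' = x
      · subst hhx
        exact hNHPstay j'
      · rw [hτne h' hhx] at hstay'
        exact absurd hstay' (by simp)
    · rw [Function.update_of_ne hi] at hstay'
      exact hnhp h' hn' hT' hstay' j' hj'
  have hbr' := hbr x hnodex hT_nt τ hval' hnhp'
  -- the deviation's play: first a stay at `a`, then reference points only improve
  set x' : Hist G := x ++ [⟨I x, some (a (I x))⟩] with hx'def
  have hrefx' : refpt G a0 x' = a := by
    rw [hx'def, hmvstay]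
    unfold refpt
    rw [fold3_snoc_stay]
    exact hTa
  have havailx : availAct G a0 k x (some (a (I x))) := by
    intro a' ha'
    rw [hcnt0]
    exact hk
  have hnodex' : IsNode G a0 k I x' := hnodex.snoc hT_nt havailx
  have hstep : outcomeFrom G a0 k I (Function.update σ (I x) τ) x =
      refpt G a0 (playN G a0 I (Function.update σ (I x) τ) (bound G k) x') := by
    unfold outcomeFrom
    rw [playN_succ_of_not_terminal hT_nt]
    have hmveq : (⟨I x, Function.update σ (I x) τ (I x) x⟩ : Move G) =
        ⟨I x, some (a (I x))⟩ := by
      rw [Function.update_self, hτx]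
    rw [hmveq]
  have hmono := refpt_mono (π := Function.update σ (I x) τ) hval' hnhp' (I x)
    (fun h'' hl _ => by
      rw [Function.update_self]
      refine hτne h'' (fun hxx => ?_)
      rw [hxx, hx'def] at hl
      simp at hl) hnodex' (bound G k)
  have hchain : G.u (I x) a ≤
      G.u (I x) (outcomeFrom G a0 k I (Function.update σ (I x) τ) x) := by
    rw [hstep, ← hrefx']
    exact hmono
  have hfinal : outcomeFrom G a0 k I σ x = b := by
    rw [hxdef, outcomeFrom_playN_nil hterm hs0 T, hb]
  rw [hfinal] at hbr'
  exact absurd (hchain.trans hbr') (not_le.mpr (hdom (I x)))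

end NoHarm
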